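/- Every 2-comparable set of triples in [2]×[3]×[4] has size at most 4. More generally, if two triples in a 2-comparable set share their third coordinate c, say (a,b,c) and (a',b',c), then no triple in the set has first two coordinates (a,b') or (a',b). -/

import Mathlib

/-!
Two triples of a 2-comparable set never agree in two coordinates, so projecting to the first two
coordinates is injective and maps a set in `[2]×[3]×[4]` into the six cells of `[2]×[3]`. Two
triples `(a,b,c)`, `(a',b',c)` with a common third coordinate are strictly ordered in both other
coordinates, and a triple in the cell `(a,b')` or `(a',b)` would have to lie strictly above and
strictly below `c`. With five triples, four values of the third coordinate force such a pair, which
empties two cells and leaves room for only four triples.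
-/

/-- `a` is 2-less than `b`: `a_i < b_i` in at least two of the three coordinates. -/
def Less2 (a b : ℤ × ℤ × ℤ) : Prop :=
  (a.1 < b.1 ∧ a.2.1 < b.2.1) ∨ (a.1 < b.1 ∧ a.2.2 < b.2.2) ∨ (a.2.1 < b.2.1 ∧ a.2.2 < b.2.2)

def TwoComparable (S : Set (ℤ × ℤ × ℤ)) : Prop :=
  ∀ a ∈ S, ∀ b ∈ S, a ≠ b → Less2 a b ∨ Less2 b a

namespace TwoComparable

variable {S : Set (ℤ × ℤ × ℤ)}

theorem injOn_fst_snd_fst (hS : TwoComparable S) : S.InjOn fun t => (t.1, t.2.1) := by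
  intro x hx y hy hxy
  simp only [Prod.mk.injEq] at hxy
  by_contra hne
  rcases hS x hx y hy hne with h | h <;> (unfold Less2 at h; omega)

theorem lt_and_lt_of_snd_snd_eq (hS : TwoComparable S) {x y : ℤ × ℤ × ℤ} (hx : x ∈ S)
    (hy : y ∈ S) (hne : x ≠ y) (h₃ : x.2.2 = y.2.2) :
    (x.1 < y.1 ∧ x.2.1 < y.2.1) ∨ (y.1 < x.1 ∧ y.2.1 < x.2.1) := by
  rcases hS x hx y hy hne with h | h <;> (unfold Less2 at h; omega)

theorem notMem_of_snd_snd_eq (hS : TwoComparable S) {a b a' b' c : ℤ} (h : (a, b, c) ∈ S)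
    (h' : (a', b', c) ∈ S) (hne : (a, b) ≠ (a', b')) (z : ℤ) : (a, b', z) ∉ S := by
  intro hz
  have hne₃ : ((a, b, c) : ℤ × ℤ × ℤ) ≠ (a', b', c) := by simpa using hne
  obtain ⟨ha, hb⟩ | ⟨ha, hb⟩ : (a < a' ∧ b < b') ∨ (a' < a ∧ b' < b) :=
    hS.lt_and_lt_of_snd_snd_eq h h' hne₃ rfl <;>
  · have h₁ := hS _ hz _ h (by simp only [ne_eq, Prod.mk.injEq]; omega)
    have h₂ := hS _ hz _ h' (by simp only [ne_eq, Prod.mk.injEq]; omega)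
    simp only [Less2] at h₁ h₂
    omega

theorem card_le_four {T : Finset (ℤ × ℤ × ℤ)} (hT : TwoComparable T)
    (hbox : ∀ t ∈ T, t.1 ∈ Finset.Icc (1 : ℤ) 2 ∧ t.2.1 ∈ Finset.Icc (1 : ℤ) 3 ∧
      t.2.2 ∈ Finset.Icc (1 : ℤ) 4) :
    T.card ≤ 4 := by
  by_contra! hlt
  obtain ⟨x, hx, y, hy, hne, h₃⟩ : ∃ x ∈ T, ∃ y ∈ T, x ≠ y ∧ x.2.2 = y.2.2 :=
    Finset.exists_ne_map_eq_of_card_lt_of_maps_to (t := Finset.Icc (1 : ℤ) 4)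
      (by simpa using hlt) fun t ht => (hbox t ht).2.2
  have hxy := hT.lt_and_lt_of_snd_snd_eq hx hy hne h₃
  set cell : ℤ × ℤ × ℤ → ℤ × ℤ := fun t => (t.1, t.2.1)
  have hcell_ne : cell x ≠ cell y := by simp only [cell, ne_eq, Prod.mk.injEq]; omega
  set grid := Finset.Icc (1 : ℤ) 2 ×ˢ Finset.Icc (1 : ℤ) 3
  set empty : Finset (ℤ × ℤ) := {(x.1, y.2.1), (y.1, x.2.1)}
  have hempty : empty ⊆ grid := by
    simp only [empty, grid, Finset.insert_subset_iff, Finset.singleton_subset_iff,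
      Finset.mem_product]
    exact ⟨⟨(hbox x hx).1, (hbox y hy).2.1⟩, ⟨(hbox y hy).1, (hbox x hx).2.1⟩⟩
  have himage : T.image cell ⊆ grid \ empty := by
    simp only [Finset.subset_iff, Finset.mem_image, Finset.mem_sdiff]
    rintro _ ⟨t, ht, rfl⟩
    refine ⟨Finset.mem_product.2 ⟨(hbox t ht).1, (hbox t ht).2.1⟩, ?_⟩
    simp only [empty, Finset.mem_insert, Finset.mem_singleton, cell, Prod.mk.injEq]
    rintro (⟨h₁, h₂⟩ | ⟨h₁, h₂⟩)
    · exact hT.notMem_of_snd_snd_eq (c := x.2.2) hx (h₃ ▸ hy) hcell_ne t.2.2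
        (h₁ ▸ h₂ ▸ ht)
    · exact hT.notMem_of_snd_snd_eq (c := x.2.2) (h₃ ▸ hy) hx hcell_ne.symm t.2.2
        (h₁ ▸ h₂ ▸ ht)
  have hcard : T.card ≤ 4 := calc
    T.card = (T.image cell).card := (Finset.card_image_of_injOn hT.injOn_fst_snd_fst).symm
    _ ≤ (grid \ empty).card := Finset.card_le_card himage
    _ = 6 - 2 := by
      rw [Finset.card_sdiff_of_subset hempty,
        Finset.card_pair (by simp only [ne_eq, Prod.mk.injEq]; omega)]
      rfl
  omega

end TwoComparable

/-- Every 2-comparable set of triples in `[2]×[3]×[4]` has size at most 4; and in any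
2-comparable set, if two distinct triples `(a,b,c)` and `(a',b',c)` share their third
coordinate, then no triple of the set has first two coordinates `(a,b')` or `(a',b)`. -/
theorem stmt_17 :
    (∀ T : Finset (ℤ × ℤ × ℤ),
      (∀ t ∈ T, t.1 ∈ Finset.Icc (1 : ℤ) 2 ∧ t.2.1 ∈ Finset.Icc (1 : ℤ) 3 ∧
        t.2.2 ∈ Finset.Icc (1 : ℤ) 4) →
      (∀ a ∈ T, ∀ b ∈ T, a ≠ b → Less2 a b ∨ Less2 b a) →
      T.card ≤ 4) ∧
    (∀ T : Set (ℤ × ℤ × ℤ),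
      (∀ a ∈ T, ∀ b ∈ T, a ≠ b → Less2 a b ∨ Less2 b a) →
      ∀ a b a' b' c : ℤ, (a, b, c) ∈ T → (a', b', c) ∈ T → (a, b) ≠ (a', b') →
        ∀ z : ℤ, (a, b', z) ∉ T ∧ (a', b, z) ∉ T) :=
  ⟨fun _ hbox hT => TwoComparable.card_le_four hT hbox,
    fun _ hT _ _ _ _ _ h h' hne z =>
      ⟨TwoComparable.notMem_of_snd_snd_eq hT h h' hne z,
        TwoComparable.notMem_of_snd_snd_eq hT h' h hne.symm z⟩⟩
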